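/- Let π be a set of primes, G a finite group, and F an N^π-Fitting set of G. Then the F-radical G_F equals each of the following: the join of all normal subgroups of G in F; the join of all subnormal subgroups of G in F; the join of all N^π-Dnormal subgroups of G in F; and the join of all N^π-Dsubnormal subgroups of G in F. -/

import Mathlib

/-!
For `H ≤ G` let `H_F` be the join of the members of `F` normal in `H`; since `F` is closed under
joins of normal pairs, `H_F ∈ F`. The heart of the proof is that every `S ∈ F` that is
`N^π`-Dnormal in `H` lies in `H_F`. For `|π| ≥ 2`, look at the members `W ∈ F` with
`H_F ≤ W ≤ H` that are normalized by `O^π(H)`. For such `W`, `W ∩ O^π(H)` lies in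
`O^π(H)_F ≤ H_F`, so `|W : H_F|` is a `π`-number and `O^π(W) = O^π(H_F)` is normal in `H`:
each such `W` is `N^π`-Dnormal in `H`. Hence these `W` are closed under joins and under
conjugation by `H`, and their join is a member of `F` normal in `H` that contains `S H_F`, so
`S ≤ H_F`. If `M` is `N^π`-Dnormal in `H`, then so is `M_F`, because
`O^π(M_F) = O^π(M_F ∩ O^π(M)) = O^π(O^π(M)_F)`; hence `M_F ≤ H_F`. Walking up a (D)subnormal
chain then puts every subnormal, `N^π`-Dnormal or `N^π`-Dsubnormal member of `F` into `G_F`.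
-/

/-- A (finite) group is a `π`-group if every prime dividing its order lies in `π`. -/
def IsPiGroup (π : Set ℕ) (G : Type*) [Group G] : Prop :=
  ∀ p : ℕ, p.Prime → p ∣ Nat.card G → p ∈ π

/-- `O^π(G)`: the smallest normal subgroup of `G` whose quotient is a `π`-group
(recall that `N.index = Nat.card (G ⧸ N)`). -/
def piResidual (π : Set ℕ) (G : Type*) [Group G] : Subgroup G :=
  ⨅ N ∈ {N : Subgroup G | N.Normal ∧ ∀ p : ℕ, p.Prime → p ∣ N.index → p ∈ π}, N

/-- `O_π(G)`: the largest normal `π`-subgroup of `G`. -/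
def piCore (π : Set ℕ) (G : Type*) [Group G] : Subgroup G :=
  ⨆ N ∈ {N : Subgroup G | N.Normal ∧ IsPiGroup π N}, N

/-- `O^π(H)` for a subgroup `H ≤ G`, regarded as a subgroup of `G`. -/
def piResidualIn (π : Set ℕ) {G : Type*} [Group G] (H : Subgroup G) : Subgroup G :=
  (piResidual π H).map H.subtype

/-- `H` is `N^π`-Dnormal in `G`: if `|π| ≤ 1` this means `H` is normal in `G`; if
`|π| ≥ 2` it means that `O^π(H)` is normal in `G` and `O^π(G)` normalizes `H`. -/
def IsDnormal (π : Set ℕ) {G : Type*} [Group G] (H : Subgroup G) : Prop :=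
  (π.Subsingleton ∧ H.Normal) ∨
  (¬ π.Subsingleton ∧ (piResidualIn π H).Normal ∧ piResidual π G ≤ Subgroup.normalizer (H : Set G))

/-- `S` is `N^π`-Dsubnormal in `G`: there is a chain `S = S₀ ≤ S₁ ≤ ⋯ ≤ Sₙ = G`
with each `Sᵢ` being `N^π`-Dnormal in `Sᵢ₊₁`. -/
def IsDsubnormal (π : Set ℕ) {G : Type*} [Group G] (S : Subgroup G) : Prop :=
  ∃ (n : ℕ) (c : Fin (n + 1) → Subgroup G), c 0 = S ∧ c (Fin.last n) = ⊤ ∧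
    ∀ i : Fin n, c i.castSucc ≤ c i.succ ∧
      IsDnormal π ((c i.castSucc).subgroupOf (c i.succ))

/-- `H` is subnormal in `G`. -/
def IsSubnormal' {G : Type*} [Group G] (H : Subgroup G) : Prop :=
  ∃ (n : ℕ) (c : Fin (n + 1) → Subgroup G), c 0 = H ∧ c (Fin.last n) = ⊤ ∧
    ∀ i : Fin n, c i.castSucc ≤ c i.succ ∧
      ((c i.castSucc).subgroupOf (c i.succ)).Normal

/-- The class `N^π`: groups that are the (internal) direct product of a `π`-group and a
nilpotent `π'`-group. -/
def IsNPiGroup (π : Set ℕ) (G : Type*) [Group G] : Prop :=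
  ∃ H K : Subgroup G, H.Normal ∧ K.Normal ∧ H ⊓ K = ⊥ ∧ H ⊔ K = ⊤ ∧
    IsPiGroup π H ∧ IsPiGroup πᶜ K ∧ Group.IsNilpotent K

/-- The `N^π`-residual `G^{N^π}`: the smallest normal subgroup of `G` whose quotient
belongs to the class `N^π`. -/
def nPiResidual (π : Set ℕ) (G : Type*) [Group G] : Subgroup G :=
  ⨅ N ∈ {N : Subgroup G | ∃ h : N.Normal, letI := h; IsNPiGroup π (G ⧸ N)}, N

/-- `G` is `π'`-soluble: it has a normal series each of whose factors is either a
`π`-group or a `p`-group for some prime `p ∉ π`. -/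
def IsPiPrimeSoluble (π : Set ℕ) (G : Type*) [Group G] : Prop :=
  ∃ (n : ℕ) (c : Fin (n + 1) → Subgroup G), c 0 = ⊥ ∧ c (Fin.last n) = ⊤ ∧
    ∀ i : Fin n, c i.castSucc ≤ c i.succ ∧
      ((c i.castSucc).subgroupOf (c i.succ)).Normal ∧
      ((∀ p : ℕ, p.Prime → p ∣ ((c i.castSucc).subgroupOf (c i.succ)).index → p ∈ π) ∨
        ∃ p : ℕ, p.Prime ∧ p ∉ π ∧
          ∃ k : ℕ, ((c i.castSucc).subgroupOf (c i.succ)).index = p ^ k)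

/-- An `N^π`-Fitting set of `G`. -/
def IsNPiFittingSet (π : Set ℕ) {G : Type*} [Group G] (F : Set (Subgroup G)) : Prop :=
  F.Nonempty ∧
  (∀ S ∈ F, ∀ T : Subgroup G, T ≤ S → IsDsubnormal π (T.subgroupOf S) → T ∈ F) ∧
  (∀ S ∈ F, ∀ T ∈ F, IsDnormal π (S.subgroupOf (S ⊔ T)) →
    IsDnormal π (T.subgroupOf (S ⊔ T)) → S ⊔ T ∈ F) ∧
  (∀ S ∈ F, ∀ x : G, S.map (MulAut.conj x).toMonoidHom ∈ F)

/-- The `F`-radical `H_F` of a subgroup `H` of `G`: the join of all subgroups of `H`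
belonging to `F` that are normal in `H`. -/
def fittingRadical {G : Type*} [Group G] (F : Set (Subgroup G)) (H : Subgroup G) : Subgroup G :=
  ⨆ S ∈ {S : Subgroup G | S ∈ F ∧ S ≤ H ∧ (S.subgroupOf H).Normal}, S

/-- `M` is an `F`-maximal subgroup of `K`. -/
def IsFMaximalIn {G : Type*} [Group G] (F : Set (Subgroup G)) (M K : Subgroup G) : Prop :=
  M ∈ F ∧ M ≤ K ∧ ∀ S ∈ F, S ≤ K → M ≤ S → S = M

/-- `V` is an `F`-injector of `G`. -/
def IsInjector {G : Type*} [Group G] (F : Set (Subgroup G)) (V : Subgroup G) : Prop :=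
  ∀ K : Subgroup G, IsSubnormal' K → IsFMaximalIn F (V ⊓ K) K

/-- `V` is an `F`-injector of the subgroup `N` of `G`. -/
def IsInjectorIn {G : Type*} [Group G] (F : Set (Subgroup G)) (V N : Subgroup G) : Prop :=
  V ≤ N ∧ ∀ K : Subgroup G, K ≤ N → IsSubnormal' (K.subgroupOf N) → IsFMaximalIn F (V ⊓ K) K

/-- `M` is an `N^π`-maximal subgroup of `X`. -/
def IsNPiMaximal (π : Set ℕ) {X : Type*} [Group X] (M : Subgroup X) : Prop :=
  IsNPiGroup π M ∧ ∀ M' : Subgroup X, IsNPiGroup π M' → M ≤ M' → M' = M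

/-- `U` is an `N^π`-projector of `G`: `UK/K` is `N^π`-maximal in `G/K` for every
normal subgroup `K` of `G`. -/
def IsNPiProjector (π : Set ℕ) {G : Type*} [Group G] (U : Subgroup G) : Prop :=
  ∀ K : Subgroup G, ∀ hK : K.Normal,
    letI := hK
    IsNPiMaximal π ((U ⊔ K).map (QuotientGroup.mk' K))

/-- An `N^π`-Fitting class of (finite) groups: a non-empty isomorphism-closed class
closed under `N^π`-Dnormal subgroups and under joins of pairs of `N^π`-Dnormal
subgroups. -/
def IsNPiFittingClass (π : Set ℕ) (F : (H : Type) → [_inst : Group H] → Prop) : Prop :=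
  (∃ (H : Type) (g : Group H) (_ : Finite H), F H (_inst := g)) ∧
  (∀ (H K : Type) [Group H] [Group K] [Finite H] [Finite K],
    F H → Nonempty (H ≃* K) → F K) ∧
  (∀ (H : Type) [Group H] [Finite H] (N : Subgroup H),
    F H → IsDnormal π N → F ↥N) ∧
  (∀ (H : Type) [Group H] [Finite H] (M N : Subgroup H),
    F ↥M → F ↥N → IsDnormal π M → IsDnormal π N → M ⊔ N = ⊤ → F H)

open Subgroup

def IsPiNumber (π : Set ℕ) (n : ℕ) : Prop :=
  ∀ p : ℕ, p.Prime → p ∣ n → p ∈ π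

lemma IsPiNumber.of_dvd {π : Set ℕ} {m n : ℕ} (hn : IsPiNumber π n) (h : m ∣ n) :
    IsPiNumber π m :=
  fun p hp hpm => hn p hp (hpm.trans h)

lemma IsPiNumber.mul {π : Set ℕ} {m n : ℕ} (hm : IsPiNumber π m) (hn : IsPiNumber π n) :
    IsPiNumber π (m * n) := fun p hp hpmn =>
  (hp.dvd_mul.1 hpmn).elim (hm p hp) (hn p hp)

section Normalizer

variable {G : Type*} [Group G] {A B K : Subgroup G}

lemma le_normalizer_inf (hA : K ≤ normalizer (A : Set G)) (hB : K ≤ normalizer (B : Set G)) :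
    K ≤ normalizer ((A ⊓ B : Subgroup G) : Set G) :=
  (le_inf hA hB).trans inf_normalizer_le_normalizer_inf

lemma le_normalizer_sup (hA : K ≤ normalizer (A : Set G)) (hB : K ≤ normalizer (B : Set G)) :
    K ≤ normalizer ((A ⊔ B : Subgroup G) : Set G) :=
  (le_inf hA hB).trans (normalizer_inf_normalizer_le_normalizer_sup A B)

lemma le_normalizer_sSup {s : Set (Subgroup G)}
    (hs : ∀ W ∈ s, ∀ g ∈ K, W.map (MulAut.conj g : G →* G) ∈ s) :
    K ≤ normalizer ((sSup s : Subgroup G) : Set G) := by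
  refine le_normalizer_iff.2 fun g hg k hk => ?_
  have hle : sSup s ≤ (sSup s).comap (MulAut.conj g : G →* G) :=
    sSup_le fun W hW => map_le_iff_le_comap.1 (le_sSup (hs W hW g hg))
  simpa using hle hk

end Normalizer

section PiResidual

variable {π : Set ℕ} {G : Type*} [Group G]

lemma piResidual_le {N : Subgroup G} (hN : N.Normal) (h : IsPiNumber π N.index) :
    piResidual π G ≤ N :=
  iInf₂_le N ⟨hN, h⟩

lemma map_piResidual_le {A B : Type*} [Group A] [Group B] (f : A →* B)
    (hf : Function.Surjective f) : (piResidual π A).map f ≤ piResidual π B :=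
  le_iInf₂ fun N hN => map_le_iff_le_comap.2 <|
    piResidual_le (hN.1.comap f) (by rw [index_comap_of_surjective N hf]; exact hN.2)

lemma map_piResidual_mulEquiv {A B : Type*} [Group A] [Group B] (e : A ≃* B) :
    (piResidual π A).map (e : A →* B) = piResidual π B := by
  refine le_antisymm (map_piResidual_le _ e.surjective) ?_
  rw [map_equiv_eq_comap_symm, ← map_le_iff_le_comap]
  exact map_piResidual_le _ e.symm.surjective

lemma isPiNumber_index_piResidual [Finite G] : IsPiNumber π (piResidual π G).index := by
  let s : Set (Subgroup G) := {N | N.Normal ∧ IsPiNumber π N.index}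
  have hs : InfClosed s := by
    rintro N ⟨hN, hNi⟩ M ⟨hM, hMi⟩
    refine ⟨inferInstance, ?_⟩
    rw [← relIndex_mul_index (inf_le_right : N ⊓ M ≤ M), inf_relIndex_right]
    exact (hNi.of_dvd (relIndex_dvd_index_of_normal N M)).mul hMi
  have htop : ⊤ ∈ s := ⟨inferInstance, fun p hp h => absurd (by simpa using h) hp.ne_one⟩
  rw [show piResidual π G = sInf s from sInf_eq_iInf.symm]
  exact (hs.sInf_mem_of_nonempty s.toFinite ⟨⊤, htop⟩ subset_rfl).2

end PiResidual

section PiResidualIn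

variable {π : Set ℕ} {G : Type*} [Group G] {A H K N : Subgroup G}

lemma piResidualIn_le : piResidualIn π H ≤ H :=
  map_subtype_le _

lemma map_piResidualIn {G' : Type*} [Group G'] (f : G ≃* G') (H : Subgroup G) :
    (piResidualIn π H).map (f : G →* G') = piResidualIn π (H.map (f : G →* G')) := by
  have hcomp : (H.map (f : G →* G')).subtype.comp (f.subgroupMap H : H →* H.map (f : G →* G'))
      = (f : G →* G').comp H.subtype := rfl
  rw [piResidualIn, piResidualIn, ← map_piResidual_mulEquiv (f.subgroupMap H), map_map, map_map,
    hcomp]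

lemma normalizer_le_normalizer_piResidualIn :
    normalizer (H : Set G) ≤ normalizer (piResidualIn π H : Set G) := fun g hg => by
  rw [mem_normalizer_iff_map_conj_eq] at hg ⊢
  rw [map_piResidualIn, hg]

lemma le_normalizer_piResidualIn : H ≤ normalizer (piResidualIn π H : Set G) :=
  le_normalizer.trans normalizer_le_normalizer_piResidualIn

lemma piResidualIn_top : piResidualIn π (⊤ : Subgroup G) = piResidual π G :=
  map_piResidual_mulEquiv (topEquiv (G := G))

lemma piResidualIn_subgroupOf (hSK : A ≤ K) :
    piResidualIn π (A.subgroupOf K) = (piResidualIn π A).subgroupOf K := by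
  have hcomp : K.subtype.comp (A.subgroupOf K).subtype
      = A.subtype.comp (subgroupOfEquivOfLe hSK : A.subgroupOf K →* A) := rfl
  have hmap : (piResidualIn π (A.subgroupOf K)).map K.subtype = piResidualIn π A := by
    rw [piResidualIn, piResidualIn, ← map_piResidual_mulEquiv (subgroupOfEquivOfLe hSK), map_map,
      map_map, hcomp]
  rw [← hmap]
  exact (comap_map_eq_self_of_injective K.subtype_injective _).symm

lemma relIndex_dvd_relIndex_of_le_normalizer (hNK : N ≤ K) (hKN : K ≤ normalizer (N : Set G))
    (hAK : A ≤ K) : N.relIndex A ∣ N.relIndex K := by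
  have : (N.subgroupOf K).Normal := (normal_subgroupOf_iff_le_normalizer hNK).2 hKN
  have h := relIndex_dvd_index_of_normal (N.subgroupOf K) (A.subgroupOf K)
  rwa [relIndex_subgroupOf hAK] at h

lemma piResidualIn_le_of_isPiNumber (hNH : N ≤ H) (hHN : H ≤ normalizer (N : Set G))
    (h : IsPiNumber π (N.relIndex H)) : piResidualIn π H ≤ N :=
  map_le_iff_le_comap.2 <| (piResidual_le ((normal_subgroupOf_iff_le_normalizer hNH).2 hHN) h).trans
    (comap_mono le_rfl)

variable [Finite G]

lemma isPiNumber_relIndex_piResidualIn : IsPiNumber π ((piResidualIn π H).relIndex H) := by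
  rw [relIndex, piResidualIn, subgroupOf, comap_map_eq_self_of_injective H.subtype_injective]
  exact isPiNumber_index_piResidual

lemma piResidualIn_mono (hHK : H ≤ K) : piResidualIn π H ≤ piResidualIn π K := by
  refine (piResidualIn_le_of_isPiNumber (N := piResidualIn π K ⊓ H) inf_le_right ?_ ?_).trans
    inf_le_left
  · exact le_normalizer_inf (hHK.trans le_normalizer_piResidualIn) le_normalizer
  · rw [inf_relIndex_right]
    exact isPiNumber_relIndex_piResidualIn.of_dvd
      (relIndex_dvd_relIndex_of_le_normalizer piResidualIn_le le_normalizer_piResidualIn hHK)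

lemma piResidualIn_eq_of_isPiNumber (hAK : A ≤ K) (hKA : K ≤ normalizer (A : Set G))
    (h : IsPiNumber π (A.relIndex K)) : piResidualIn π K = piResidualIn π A := by
  refine le_antisymm ?_ (piResidualIn_mono hAK)
  refine piResidualIn_le_of_isPiNumber (piResidualIn_le.trans hAK)
    (hKA.trans normalizer_le_normalizer_piResidualIn) ?_
  rw [← relIndex_mul_relIndex _ _ _ piResidualIn_le hAK]
  exact isPiNumber_relIndex_piResidualIn.mul h

lemma piResidualIn_eq_of_inf_le {R W : Subgroup G} (hRW : R ≤ W) (hWH : W ≤ H)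
    (hWR : W ≤ normalizer (R : Set G)) (hinf : W ⊓ piResidualIn π H ≤ R) :
    piResidualIn π W = piResidualIn π R := by
  refine piResidualIn_eq_of_isPiNumber hRW hWR
    ((isPiNumber_relIndex_piResidualIn (H := H)).of_dvd ?_)
  calc R.relIndex W ∣ (W ⊓ piResidualIn π H).relIndex W := relIndex_dvd_of_le_left W hinf
    _ = (piResidualIn π H).relIndex W := inf_relIndex_left _ _
    _ ∣ (piResidualIn π H).relIndex H :=
      relIndex_dvd_relIndex_of_le_normalizer piResidualIn_le le_normalizer_piResidualIn hWH

end PiResidualIn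

section DnormalIn

variable {π : Set ℕ} {G : Type*} [Group G] {S H K : Subgroup G}

def IsDnormalIn (π : Set ℕ) (S H : Subgroup G) : Prop :=
  S ≤ H ∧ ((π.Subsingleton ∧ H ≤ normalizer (S : Set G)) ∨
    (¬ π.Subsingleton ∧ H ≤ normalizer (piResidualIn π S : Set G) ∧
      piResidualIn π H ≤ normalizer (S : Set G)))

lemma IsDnormalIn.of_le_normalizer (hSH : S ≤ H) (hHS : H ≤ normalizer (S : Set G)) :
    IsDnormalIn π S H := by
  refine ⟨hSH, ?_⟩
  by_cases hπ : π.Subsingleton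
  · exact Or.inl ⟨hπ, hHS⟩
  · exact Or.inr ⟨hπ, hHS.trans normalizer_le_normalizer_piResidualIn,
      piResidualIn_le.trans hHS⟩

lemma IsDnormalIn.mono [Finite G] (h : IsDnormalIn π S H) (hSK : S ≤ K) (hKH : K ≤ H) :
    IsDnormalIn π S K := by
  refine ⟨hSK, h.2.imp (fun h₁ => ⟨h₁.1, hKH.trans h₁.2⟩) fun h₂ => ⟨h₂.1, hKH.trans h₂.2.1, ?_⟩⟩
  exact (piResidualIn_mono hKH).trans h₂.2.2

lemma isDnormal_subgroupOf_iff (hSH : S ≤ H) :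
    IsDnormal π (S.subgroupOf H) ↔ IsDnormalIn π S H := by
  have hD : piResidual π H ≤ normalizer (S.subgroupOf H : Set H) ↔
      piResidualIn π H ≤ normalizer (S : Set G) := by
    rw [← subgroupOf_normalizer_eq hSH, piResidualIn, map_le_iff_le_comap]
    rfl
  rw [IsDnormal, IsDnormalIn, normal_subgroupOf_iff_le_normalizer hSH, piResidualIn_subgroupOf hSH,
    normal_subgroupOf_iff_le_normalizer (piResidualIn_le.trans hSH), hD]
  exact (and_iff_right hSH).symm

lemma isDnormal_iff : IsDnormal π S ↔ IsDnormalIn π S ⊤ := by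
  rw [IsDnormal, IsDnormalIn, piResidualIn_top, ← normalizer_eq_top_iff, ← normalizer_eq_top_iff,
    top_le_iff, top_le_iff]
  exact (and_iff_right le_top).symm

lemma isDnormal_of_normal {N : Subgroup G} (hN : N.Normal) : IsDnormal π N :=
  isDnormal_iff.2 <| .of_le_normalizer le_top (normalizer_eq_top_iff.2 hN).ge

lemma isDsubnormal_of_normal {N : Subgroup G} (hN : N.Normal) : IsDsubnormal π N :=
  ⟨1, ![N, ⊤], rfl, rfl, Fin.forall_fin_one.2 ⟨le_top, isDnormal_of_normal (hN.subgroupOf ⊤)⟩⟩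

lemma isSubnormal'_of_normal {N : Subgroup G} (hN : N.Normal) : IsSubnormal' N :=
  ⟨1, ![N, ⊤], rfl, rfl, Fin.forall_fin_one.2 ⟨le_top, hN.subgroupOf ⊤⟩⟩

end DnormalIn

namespace IsNPiFittingSet

variable {π : Set ℕ} {G : Type*} [Group G] {F : Set (Subgroup G)} {S T H : Subgroup G}

lemma mem_of_le_normalizer (hF : IsNPiFittingSet π F) (hS : S ∈ F) (hTS : T ≤ S)
    (hST : S ≤ normalizer (T : Set G)) : T ∈ F :=
  hF.2.1 S hS T hTS <| isDsubnormal_of_normal <| (normal_subgroupOf_iff_le_normalizer hTS).2 hST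

lemma bot_mem (hF : IsNPiFittingSet π F) : ⊥ ∈ F :=
  let ⟨_, hS⟩ := hF.1
  hF.mem_of_le_normalizer hS bot_le le_normalizer_of_normal

lemma sup_mem (hF : IsNPiFittingSet π F) (hS : S ∈ F) (hT : T ∈ F)
    (hSD : IsDnormalIn π S (S ⊔ T)) (hTD : IsDnormalIn π T (S ⊔ T)) : S ⊔ T ∈ F :=
  hF.2.2.1 S hS T hT ((isDnormal_subgroupOf_iff le_sup_left).2 hSD)
    ((isDnormal_subgroupOf_iff le_sup_right).2 hTD)

lemma map_conj_mem (hF : IsNPiFittingSet π F) (hS : S ∈ F) (g : G) :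
    S.map (MulAut.conj g : G →* G) ∈ F :=
  hF.2.2.2 S hS g

end IsNPiFittingSet

section FittingRadical

variable {π : Set ℕ} {G : Type*} [Group G] {F : Set (Subgroup G)} {S H : Subgroup G}

lemma fittingRadical_eq_sSup (F : Set (Subgroup G)) (H : Subgroup G) :
    fittingRadical F H = sSup {S | S ∈ F ∧ S ≤ H ∧ H ≤ normalizer (S : Set G)} := by
  rw [fittingRadical, sSup_eq_iSup]
  refine le_antisymm (biSup_mono fun S hS => ⟨hS.1, hS.2.1, ?_⟩)
    (biSup_mono fun S hS => ⟨hS.1, hS.2.1, ?_⟩)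
  · exact (normal_subgroupOf_iff_le_normalizer hS.2.1).1 hS.2.2
  · exact (normal_subgroupOf_iff_le_normalizer hS.2.1).2 hS.2.2

lemma le_fittingRadical (hS : S ∈ F) (hSH : S ≤ H) (hHS : H ≤ normalizer (S : Set G)) :
    S ≤ fittingRadical F H :=
  fittingRadical_eq_sSup F H ▸ le_sSup ⟨hS, hSH, hHS⟩

lemma fittingRadical_le : fittingRadical F H ≤ H :=
  fittingRadical_eq_sSup F H ▸ sSup_le fun _ hS => hS.2.1

lemma fittingRadical_top :
    fittingRadical F ⊤ = ⨆ S ∈ {S : Subgroup G | S ∈ F ∧ S.Normal}, S := by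
  simp only [fittingRadical_eq_sSup, sSup_eq_iSup, top_le_iff, normalizer_eq_top_iff, le_top,
    true_and]

lemma le_normalizer_fittingRadical : H ≤ normalizer (fittingRadical F H : Set G) := by
  rw [fittingRadical_eq_sSup, sSup_eq_iSup']
  exact (le_iInf fun S => S.2.2.2).trans (iInf_normalizer_le_normalizer_iSup _)

lemma IsNPiFittingSet.fittingRadical_mem [Finite G] (hF : IsNPiFittingSet π F) :
    fittingRadical F H ∈ F := by
  let s := {S | S ∈ F ∧ S ≤ H ∧ H ≤ normalizer (S : Set G)}
  have hs : SupClosed s := by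
    rintro S ⟨hS, hSH, hHS⟩ T ⟨hT, hTH, hHT⟩
    have hST : S ⊔ T ≤ H := sup_le hSH hTH
    exact ⟨hF.sup_mem hS hT (.of_le_normalizer le_sup_left (hST.trans hHS))
      (.of_le_normalizer le_sup_right (hST.trans hHT)), hST, le_normalizer_sup hHS hHT⟩
  have hbot : ⊥ ∈ s := ⟨hF.bot_mem, bot_le, le_normalizer_of_normal⟩
  rw [fittingRadical_eq_sSup]
  exact (hs.sSup_mem_of_nonempty s.toFinite ⟨⊥, hbot⟩ subset_rfl).1

lemma IsNPiFittingSet.map_conj_fittingRadical_le (hF : IsNPiFittingSet π F) (g : G) :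
    (fittingRadical F H).map (MulAut.conj g : G →* G) ≤
      fittingRadical F (H.map (MulAut.conj g : G →* G)) := by
  rw [fittingRadical_eq_sSup, map_le_iff_le_comap]
  refine sSup_le fun S ⟨hS, hSH, hHS⟩ => map_le_iff_le_comap.1 <|
    le_fittingRadical (hF.map_conj_mem hS g) (map_mono hSH) ?_
  exact (map_mono hHS).trans (le_normalizer_map _)

lemma IsNPiFittingSet.normalizer_le_normalizer_fittingRadical (hF : IsNPiFittingSet π F) :
    normalizer (H : Set G) ≤ normalizer (fittingRadical F H : Set G) := by
  refine le_normalizer_iff.2 fun g hg k hk => ?_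
  rw [mem_normalizer_iff_map_conj_eq] at hg
  have := hF.map_conj_fittingRadical_le g (mem_map_of_mem _ hk)
  rwa [hg] at this

end FittingRadical

namespace IsNPiFittingSet

variable {π : Set ℕ} {G : Type*} [Group G] [Finite G] {F : Set (Subgroup G)}
  {S H M N W : Subgroup G}

lemma fittingRadical_le_fittingRadical (hF : IsNPiFittingSet π F) (hNM : N ≤ M)
    (hMN : M ≤ normalizer (N : Set G)) : fittingRadical F N ≤ fittingRadical F M :=
  le_fittingRadical hF.fittingRadical_mem (fittingRadical_le.trans hNM)
    (hMN.trans hF.normalizer_le_normalizer_fittingRadical)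

lemma fittingRadical_inf (hF : IsNPiFittingSet π F) (hNM : N ≤ M)
    (hMN : M ≤ normalizer (N : Set G)) : fittingRadical F M ⊓ N = fittingRadical F N := by
  refine le_antisymm ?_ (le_inf (hF.fittingRadical_le_fittingRadical hNM hMN) fittingRadical_le)
  refine le_fittingRadical (hF.mem_of_le_normalizer hF.fittingRadical_mem inf_le_left ?_)
    inf_le_right (le_normalizer_inf (hNM.trans le_normalizer_fittingRadical) le_normalizer)
  exact le_normalizer_inf le_normalizer (fittingRadical_le.trans hMN)

lemma inf_piResidualIn_le_fittingRadical (hF : IsNPiFittingSet π F) (hW : W ∈ F) (hWH : W ≤ H)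
    (hDW : piResidualIn π H ≤ normalizer (W : Set G)) :
    W ⊓ piResidualIn π H ≤ fittingRadical F H :=
  have hWD : W ⊓ piResidualIn π H ∈ F := hF.mem_of_le_normalizer hW inf_le_left
    (le_normalizer_inf le_normalizer (hWH.trans le_normalizer_piResidualIn))
  calc W ⊓ piResidualIn π H ≤ fittingRadical F (piResidualIn π H) :=
        le_fittingRadical hWD inf_le_right (le_normalizer_inf hDW le_normalizer)
    _ ≤ fittingRadical F H :=
        hF.fittingRadical_le_fittingRadical piResidualIn_le le_normalizer_piResidualIn

lemma isDnormalIn_of_fittingRadical_le (hF : IsNPiFittingSet π F) (hπ : ¬ π.Subsingleton)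
    (hW : W ∈ F) (hRW : fittingRadical F H ≤ W) (hWH : W ≤ H)
    (hDW : piResidualIn π H ≤ normalizer (W : Set G)) : IsDnormalIn π W H := by
  have hHR : H ≤ normalizer (fittingRadical F H : Set G) := le_normalizer_fittingRadical
  have hO : piResidualIn π W = piResidualIn π (fittingRadical F H) :=
    piResidualIn_eq_of_inf_le hRW hWH (hWH.trans hHR)
      (hF.inf_piResidualIn_le_fittingRadical hW hWH hDW)
  exact ⟨hWH, Or.inr ⟨hπ, hO ▸ hHR.trans normalizer_le_normalizer_piResidualIn, hDW⟩⟩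

lemma le_fittingRadical_of_isDnormalIn (hF : IsNPiFittingSet π F) (hS : S ∈ F)
    (h : IsDnormalIn π S H) : S ≤ fittingRadical F H := by
  obtain ⟨hSH, ⟨-, hHS⟩ | ⟨hπ, -, hDS⟩⟩ := id h
  · exact le_fittingRadical hS hSH hHS
  set R := fittingRadical F H
  have hHR : H ≤ normalizer (R : Set G) := le_normalizer_fittingRadical
  let s := {W | W ∈ F ∧ R ≤ W ∧ W ≤ H ∧ piResidualIn π H ≤ normalizer (W : Set G)}
  have hs : SupClosed s := by
    rintro W₁ ⟨hW₁, hRW₁, hW₁H, hDW₁⟩ W₂ ⟨hW₂, hRW₂, hW₂H, hDW₂⟩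
    have hWH : W₁ ⊔ W₂ ≤ H := sup_le hW₁H hW₂H
    refine ⟨hF.sup_mem hW₁ hW₂ ?_ ?_, le_sup_of_le_left hRW₁, hWH, le_normalizer_sup hDW₁ hDW₂⟩
    · exact (hF.isDnormalIn_of_fittingRadical_le hπ hW₁ hRW₁ hW₁H hDW₁).mono le_sup_left hWH
    · exact (hF.isDnormalIn_of_fittingRadical_le hπ hW₂ hRW₂ hW₂H hDW₂).mono le_sup_right hWH
  have hconj : ∀ W ∈ s, ∀ g ∈ H, W.map (MulAut.conj g : G →* G) ∈ s := by
    rintro W ⟨hW, hRW, hWH, hDW⟩ g hg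
    have hHg := mem_normalizer_iff_map_conj_eq.1 (le_normalizer hg)
    have hRg := mem_normalizer_iff_map_conj_eq.1 (hHR hg)
    have hDg := mem_normalizer_iff_map_conj_eq.1 (le_normalizer_piResidualIn (π := π) hg)
    exact ⟨hF.map_conj_mem hW g, hRg ▸ map_mono hRW, hHg ▸ map_mono hWH,
      hDg ▸ (map_mono hDW).trans (le_normalizer_map _)⟩
  have hSR : S ⊔ R ∈ s := by
    have hSRH : S ⊔ R ≤ H := sup_le hSH fittingRadical_le
    refine ⟨hF.sup_mem hS hF.fittingRadical_mem (h.mono le_sup_left hSRH)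
      (.of_le_normalizer le_sup_right (hSRH.trans hHR)), le_sup_right, hSRH,
      le_normalizer_sup hDS (piResidualIn_le.trans hHR)⟩
  have hM : sSup s ∈ s := hs.sSup_mem_of_nonempty s.toFinite ⟨_, hSR⟩ subset_rfl
  calc S ≤ S ⊔ R := le_sup_left
    _ ≤ sSup s := le_sSup hSR
    _ ≤ R := le_fittingRadical hM.1 hM.2.2.1 (le_normalizer_sSup hconj)

lemma fittingRadical_le_fittingRadical_of_isDnormalIn (hF : IsNPiFittingSet π F)
    (h : IsDnormalIn π M H) : fittingRadical F M ≤ fittingRadical F H := by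
  obtain ⟨hMH, ⟨-, hHM⟩ | ⟨hπ, hHD, hDM⟩⟩ := h
  · exact hF.fittingRadical_le_fittingRadical hMH hHM
  have hO : piResidualIn π (fittingRadical F M) =
      piResidualIn π (fittingRadical F (piResidualIn π M)) := by
    rw [← hF.fittingRadical_inf piResidualIn_le le_normalizer_piResidualIn]
    exact piResidualIn_eq_of_inf_le inf_le_left fittingRadical_le
      (le_normalizer_inf le_normalizer (fittingRadical_le.trans le_normalizer_piResidualIn)) le_rfl
  refine hF.le_fittingRadical_of_isDnormalIn hF.fittingRadical_mem
    ⟨fittingRadical_le.trans hMH, Or.inr ⟨hπ, ?_, ?_⟩⟩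
  · rw [hO]
    exact hHD.trans (hF.normalizer_le_normalizer_fittingRadical.trans
      normalizer_le_normalizer_piResidualIn)
  · exact hDM.trans hF.normalizer_le_normalizer_fittingRadical

lemma le_fittingRadical_of_chain (hF : IsNPiFittingSet π F) {n : ℕ} {c : Fin (n + 1) → Subgroup G}
    (h0 : c 0 ∈ F) (hc : ∀ i : Fin n, IsDnormalIn π (c i.castSucc) (c i.succ)) :
    c 0 ≤ fittingRadical F (c (Fin.last n)) :=
  Fin.induction (motive := fun i => c 0 ≤ fittingRadical F (c i))
    (le_fittingRadical h0 le_rfl le_normalizer)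
    (fun i ih => ih.trans (hF.fittingRadical_le_fittingRadical_of_isDnormalIn (hc i))) _

lemma le_fittingRadical_top_of_isSubnormal' (hF : IsNPiFittingSet π F) (hS : S ∈ F)
    (h : IsSubnormal' S) : S ≤ fittingRadical F ⊤ := by
  obtain ⟨n, c, rfl, hlast, hc⟩ := h
  rw [← hlast]
  exact hF.le_fittingRadical_of_chain hS fun i => .of_le_normalizer (hc i).1
    ((normal_subgroupOf_iff_le_normalizer (hc i).1).1 (hc i).2)

lemma le_fittingRadical_top_of_isDsubnormal (hF : IsNPiFittingSet π F) (hS : S ∈ F)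
    (h : IsDsubnormal π S) : S ≤ fittingRadical F ⊤ := by
  obtain ⟨n, c, rfl, hlast, hc⟩ := h
  rw [← hlast]
  exact hF.le_fittingRadical_of_chain hS fun i => (isDnormal_subgroupOf_iff (hc i).1).1 (hc i).2

lemma le_fittingRadical_top_of_isDnormal (hF : IsNPiFittingSet π F) (hS : S ∈ F)
    (h : IsDnormal π S) : S ≤ fittingRadical F ⊤ :=
  hF.le_fittingRadical_of_isDnormalIn hS (isDnormal_iff.1 h)

end IsNPiFittingSet

lemma iSup_normal_eq_iSup_of_le_fittingRadical {G : Type*} [Group G] {F : Set (Subgroup G)}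
    {P : Subgroup G → Prop} (hP : ∀ S, S.Normal → P S)
    (hle : ∀ S ∈ F, P S → S ≤ fittingRadical F ⊤) :
    (⨆ S ∈ {S : Subgroup G | S ∈ F ∧ S.Normal}, S) = ⨆ S ∈ {S : Subgroup G | S ∈ F ∧ P S}, S :=
  le_antisymm (biSup_mono fun S hS => ⟨hS.1, hP S hS.2⟩)
    (iSup₂_le fun S hS => (hle S hS.1 hS.2).trans fittingRadical_top.le)

theorem radical_characterizations_general (π : Set ℕ)
    (G : Type*) [Group G] [Finite G] (F : Set (Subgroup G))
    (hF : IsNPiFittingSet π F) :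
    (⨆ S ∈ {S : Subgroup G | S ∈ F ∧ S.Normal}, S) =
        (⨆ S ∈ {S : Subgroup G | S ∈ F ∧ IsSubnormal' S}, S) ∧
    (⨆ S ∈ {S : Subgroup G | S ∈ F ∧ S.Normal}, S) =
        (⨆ S ∈ {S : Subgroup G | S ∈ F ∧ IsDnormal π S}, S) ∧
    (⨆ S ∈ {S : Subgroup G | S ∈ F ∧ S.Normal}, S) =
        (⨆ S ∈ {S : Subgroup G | S ∈ F ∧ IsDsubnormal π S}, S) :=
  ⟨iSup_normal_eq_iSup_of_le_fittingRadical (fun _ => isSubnormal'_of_normal)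
      fun _ => hF.le_fittingRadical_top_of_isSubnormal',
    iSup_normal_eq_iSup_of_le_fittingRadical (fun _ => isDnormal_of_normal)
      fun _ => hF.le_fittingRadical_top_of_isDnormal,
    iSup_normal_eq_iSup_of_le_fittingRadical (fun _ => isDsubnormal_of_normal)
      fun _ => hF.le_fittingRadical_top_of_isDsubnormal⟩

/-- Proposition 2.5: for an `N^π`-Fitting set `F` of `G`, the `F`-radical `G_F` (the join
of all normal members of `F`) coincides with the join of all subnormal members of `F`,
with the join of all `N^π`-Dnormal members of `F`, and with the join of all
`N^π`-Dsubnormal members of `F`. -/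
theorem radical_characterizations (π : Set ℕ) (hπ : ∀ p ∈ π, p.Prime)
    (G : Type*) [Group G] [Finite G] (F : Set (Subgroup G))
    (hF : IsNPiFittingSet π F) :
    (⨆ S ∈ {S : Subgroup G | S ∈ F ∧ S.Normal}, S) =
        (⨆ S ∈ {S : Subgroup G | S ∈ F ∧ IsSubnormal' S}, S) ∧
    (⨆ S ∈ {S : Subgroup G | S ∈ F ∧ S.Normal}, S) =
        (⨆ S ∈ {S : Subgroup G | S ∈ F ∧ IsDnormal π S}, S) ∧
    (⨆ S ∈ {S : Subgroup G | S ∈ F ∧ S.Normal}, S) =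
        (⨆ S ∈ {S : Subgroup G | S ∈ F ∧ IsDsubnormal π S}, S) :=
  radical_characterizations_general π G F hF
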